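/- arXiv:2009.01290 — 2 statements merged into one kernel-verified Lean document; each statement's English description precedes it below -/
import Mathlib

section
/- For 0 < m < n and distinct indices i ≠ j in {0,…,n−1}, ⟨q_{n,j}^m, q̃_{n,i}^m⟩ = 0, and for each j, ⟨q_{n,j}^m, q̃_{n,j}^m⟩ = 1/(j+1) if 0 ≤ j ≤ n−m, while ⟨q_{n,j}^m, q̃_{n,j}^m⟩ = (m+n−j)²/(4m²(j+1)) + (m−n+j)²/(4m²(2n−j+1)) if n−m < j < n. -/
/-- Orthonormal Chebyshev polynomial of the second kind (trigonometric form). -/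
noncomputable def chebP (n : ℕ) (x : ℝ) : ℝ :=
  Real.sqrt (2 / Real.pi) * Real.sin ((n + 1) * Real.arccos x) / Real.sin (Real.arccos x)

/-- The VP orthogonal basis polynomials `q_{n,j}^m`. -/
noncomputable def vpQ (n m j : ℕ) (x : ℝ) : ℝ :=
  if j ≤ n - m then chebP j x
  else ((m : ℝ) + n - j) / (2 * m) * chebP j x - ((m : ℝ) - n + j) / (2 * m) * chebP (2 * n - j) x

/-- The modified VP basis polynomials `q̃_{n,j}^m`. -/
noncomputable def vpQt (n m j : ℕ) (x : ℝ) : ℝ :=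
  if j ≤ n - m then chebP j x / (j + 1)
  else ((m : ℝ) + n - j) / (2 * m) * (chebP j x / (j + 1)) -
    ((m : ℝ) - n + j) / (2 * m) * (chebP (2 * n - j) x / (2 * (n : ℝ) - j + 1))

/-- The inner product with Chebyshev weight of the second kind. -/
noncomputable def iprod (f g : ℝ → ℝ) : ℝ :=
  ∫ x in (-1 : ℝ)..1, f x * g x * Real.sqrt (1 - x ^ 2)

/-!
Substituting `x = cos θ` turns the weight `√(1 - x²) dx` into `sin² θ dθ` on `(0, π)`, where
`p_k (cos θ) sin θ = √(2/π) sin ((k + 1) θ)`; product-to-sum then shows that the `p_k` are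
orthonormal. Both `q_{n,j}^m` and `q̃_{n,j}^m` are combinations of `p_j` and `p_{2n-j}`, and for
`i ≠ j` below `n` the indices `j, 2n - j` never meet `i, 2n - i` (as `2n - i > n > j`), so only
the diagonal coefficients survive.
-/

open Real MeasureTheory Set intervalIntegral

theorem integral_cos_intCast_mul (k : ℤ) :
    ∫ θ in (0 : ℝ)..π, cos (k * θ) = if k = 0 then π else 0 := by
  split_ifs with hk
  · simp [hk]
  · have hk' : (k : ℝ) ≠ 0 := Int.cast_ne_zero.mpr hk
    rw [integral_comp_mul_left (fun θ => cos θ) hk', integral_cos, sin_int_mul_pi]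
    simp

theorem integral_sin_natCast_succ_mul_sin (p q : ℕ) :
    ∫ θ in (0 : ℝ)..π, sin ((p + 1) * θ) * sin ((q + 1) * θ) = if p = q then π / 2 else 0 := by
  have product_to_sum (θ : ℝ) : sin ((p + 1) * θ) * sin ((q + 1) * θ) =
      (cos (((p - q : ℤ) : ℝ) * θ) - cos (((p + q + 2 : ℤ) : ℝ) * θ)) / 2 := by
    rw [show ((p - q : ℤ) : ℝ) * θ = (p + 1) * θ - (q + 1) * θ by push_cast; ring,
      show ((p + q + 2 : ℤ) : ℝ) * θ = (p + 1) * θ + (q + 1) * θ by push_cast; ring,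
      ← two_mul_sin_mul_sin]
    ring
  simp_rw [product_to_sum]
  rw [intervalIntegral.integral_div, intervalIntegral.integral_sub, integral_cos_intCast_mul,
    integral_cos_intCast_mul, if_neg (show (p + q + 2 : ℤ) ≠ 0 by omega)]
  · simp only [sub_eq_zero, Int.natCast_inj]
    split_ifs <;> simp
  all_goals exact Continuous.intervalIntegrable (by fun_prop) _ _

lemma image_cos_Ioo : cos '' Ioo 0 π = Ioo (-1) 1 :=
  cosPartialHomeomorph.image_source_eq_target

lemma abs_neg_sin_smul_mul_sqrt_one_sub_cos_sq (f : ℝ → ℝ) : EqOn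
    (fun θ => |-sin θ| • (f (cos θ) * √(1 - cos θ ^ 2))) (fun θ => f (cos θ) * sin θ ^ 2)
    (Ioo 0 π) := by
  intro θ hθ
  have hsin : 0 < sin θ := sin_pos_of_pos_of_lt_pi hθ.1 hθ.2
  simp only [← sin_sq, sqrt_sq hsin.le, abs_neg, abs_of_pos hsin, smul_eq_mul]
  ring

theorem integral_mul_sqrt_one_sub_sq (f : ℝ → ℝ) :
    ∫ x in (-1)..1, f x * √(1 - x ^ 2) = ∫ θ in 0..π, f (cos θ) * sin θ ^ 2 := by
  rw [integral_of_le (by norm_num), integral_Ioc_eq_integral_Ioo, ← image_cos_Ioo,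
    integral_image_eq_integral_abs_deriv_smul measurableSet_Ioo
      (fun θ _ => (hasDerivAt_cos θ).hasDerivWithinAt) (injOn_cos.mono Ioo_subset_Icc_self),
    setIntegral_congr_fun measurableSet_Ioo (abs_neg_sin_smul_mul_sqrt_one_sub_cos_sq f),
    ← integral_Ioc_eq_integral_Ioo, ← integral_of_le pi_pos.le]

theorem intervalIntegrable_mul_sqrt_one_sub_sq_iff (f : ℝ → ℝ) :
    IntervalIntegrable (fun x => f x * √(1 - x ^ 2)) volume (-1) 1 ↔
      IntervalIntegrable (fun θ => f (cos θ) * sin θ ^ 2) volume 0 π := by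
  rw [intervalIntegrable_iff_integrableOn_Ioo_of_le (by norm_num),
    intervalIntegrable_iff_integrableOn_Ioo_of_le pi_pos.le, ← image_cos_Ioo,
    integrableOn_image_iff_integrableOn_abs_deriv_smul measurableSet_Ioo
      (fun θ _ => (hasDerivAt_cos θ).hasDerivWithinAt) (injOn_cos.mono Ioo_subset_Icc_self)]
  exact integrableOn_congr_fun (abs_neg_sin_smul_mul_sqrt_one_sub_cos_sq f) measurableSet_Ioo

lemma chebP_cos_mul_sin {θ : ℝ} (hθ : θ ∈ Ioo 0 π) (n : ℕ) :
    chebP n (cos θ) * sin θ = √(2 / π) * sin ((n + 1) * θ) := by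
  have hsin : sin θ ≠ 0 := (sin_pos_of_pos_of_lt_pi hθ.1 hθ.2).ne'
  rw [chebP, arccos_cos hθ.1.le hθ.2.le, div_mul_cancel₀ _ hsin]

lemma chebP_mul_chebP_cos_mul_sin_sq (a b : ℕ) : EqOn
    (fun θ => chebP a (cos θ) * chebP b (cos θ) * sin θ ^ 2)
    (fun θ => 2 / π * (sin ((a + 1) * θ) * sin ((b + 1) * θ))) (Ioo 0 π) := by
  intro θ hθ
  calc chebP a (cos θ) * chebP b (cos θ) * sin θ ^ 2
      = (chebP a (cos θ) * sin θ) * (chebP b (cos θ) * sin θ) := by ring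
    _ = √(2 / π) ^ 2 * (sin ((a + 1) * θ) * sin ((b + 1) * θ)) := by
      rw [chebP_cos_mul_sin hθ, chebP_cos_mul_sin hθ]; ring
    _ = 2 / π * (sin ((a + 1) * θ) * sin ((b + 1) * θ)) := by
      rw [sq_sqrt (by positivity)]

theorem intervalIntegrable_chebP_mul_chebP_mul_sqrt (a b : ℕ) :
    IntervalIntegrable (fun x => chebP a x * chebP b x * √(1 - x ^ 2)) volume (-1) 1 := by
  refine (intervalIntegrable_mul_sqrt_one_sub_sq_iff fun x => chebP a x * chebP b x).mpr ?_
  have h : EqOn (fun θ => chebP a (cos θ) * chebP b (cos θ) * sin θ ^ 2)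
      (fun θ => 2 / π * (sin ((a + 1) * θ) * sin ((b + 1) * θ))) (uIoo 0 π) := by
    rw [uIoo_of_le pi_pos.le]
    exact chebP_mul_chebP_cos_mul_sin_sq a b
  exact (intervalIntegrable_congr_uIoo h).mpr (Continuous.intervalIntegrable (by fun_prop) 0 π)

theorem iprod_chebP_chebP (a b : ℕ) : iprod (chebP a) (chebP b) = if a = b then 1 else 0 := by
  rw [iprod, integral_mul_sqrt_one_sub_sq fun x => chebP a x * chebP b x,
    integral_congr_Ioo_of_le pi_pos.le (chebP_mul_chebP_cos_mul_sin_sq a b),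
    intervalIntegral.integral_const_mul, integral_sin_natCast_succ_mul_sin]
  split_ifs
  · field_simp
  · simp

theorem iprod_chebP_pair (c₁ c₂ d₁ d₂ : ℝ) (a A b B : ℕ) :
    iprod (fun x => c₁ * chebP a x + c₂ * chebP A x) (fun x => d₁ * chebP b x + d₂ * chebP B x) =
      c₁ * d₁ * iprod (chebP a) (chebP b) + c₁ * d₂ * iprod (chebP a) (chebP B) +
        (c₂ * d₁ * iprod (chebP A) (chebP b) + c₂ * d₂ * iprod (chebP A) (chebP B)) := by
  have hint := intervalIntegrable_chebP_mul_chebP_mul_sqrt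
  simp only [iprod, ← intervalIntegral.integral_const_mul]
  rw [← integral_add ((hint a b).const_mul _) ((hint a B).const_mul _),
    ← integral_add ((hint A b).const_mul _) ((hint A B).const_mul _),
    ← integral_add (((hint a b).const_mul _).add ((hint a B).const_mul _))
      (((hint A b).const_mul _).add ((hint A B).const_mul _))]
  congr 1 with x
  ring

lemma vpQ_eq_chebP_comb (n m j : ℕ) : vpQ n m j = fun x =>
    (if j ≤ n - m then 1 else ((m : ℝ) + n - j) / (2 * m)) * chebP j x +
      (if j ≤ n - m then 0 else -(((m : ℝ) - n + j) / (2 * m))) * chebP (2 * n - j) x := by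
  funext x
  unfold vpQ
  split_ifs <;> ring

lemma vpQt_eq_chebP_comb (n m j : ℕ) : vpQt n m j = fun x =>
    (if j ≤ n - m then 1 / ((j : ℝ) + 1) else ((m : ℝ) + n - j) / (2 * m) / (j + 1)) * chebP j x +
      (if j ≤ n - m then 0 else -(((m : ℝ) - n + j) / (2 * m) / (2 * n - j + 1))) *
        chebP (2 * n - j) x := by
  funext x
  unfold vpQt
  split_ifs <;> ring

theorem vpQ_vpQt_biorthogonality_general (n m : ℕ) :
    (∀ i j, i < n → j < n → i ≠ j → iprod (vpQ n m j) (vpQt n m i) = 0) ∧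
    (∀ j, j ≤ n - m → iprod (vpQ n m j) (vpQt n m j) = 1 / ((j : ℝ) + 1)) ∧
    (∀ j, n - m < j → j < n →
      iprod (vpQ n m j) (vpQt n m j) =
        ((m : ℝ) + n - j) ^ 2 / (4 * (m : ℝ) ^ 2 * ((j : ℝ) + 1)) +
        ((m : ℝ) - n + j) ^ 2 / (4 * (m : ℝ) ^ 2 * (2 * (n : ℝ) - j + 1))) := by
  refine ⟨fun i j hi hj hij => ?_, fun j hj => ?_, fun j hj hjn => ?_⟩
  · rw [vpQ_eq_chebP_comb, vpQt_eq_chebP_comb, iprod_chebP_pair]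
    simp only [iprod_chebP_chebP, if_neg (Ne.symm hij), if_neg (show j ≠ 2 * n - i by omega),
      if_neg (show 2 * n - j ≠ i by omega), if_neg (show 2 * n - j ≠ 2 * n - i by omega)]
    ring
  · rw [vpQ_eq_chebP_comb, vpQt_eq_chebP_comb, iprod_chebP_pair]
    simp [hj, iprod_chebP_chebP]
  · rw [vpQ_eq_chebP_comb, vpQt_eq_chebP_comb, iprod_chebP_pair]
    -- `ring` treats `(4 * m ^ 2 * (j + 1))⁻¹` as an atom, so the denominators are split first.
    simp only [iprod_chebP_chebP, if_neg (show ¬j ≤ n - m by omega), if_true, ← div_div,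
      if_neg (show j ≠ 2 * n - j by omega), if_neg (show 2 * n - j ≠ j by omega)]
    ring

theorem vpQ_vpQt_biorthogonality (n m : ℕ) (hm : 0 < m) (hmn : m < n) :
    (∀ i j, i < n → j < n → i ≠ j → iprod (vpQ n m j) (vpQt n m i) = 0) ∧
    (∀ j, j ≤ n - m → iprod (vpQ n m j) (vpQt n m j) = 1 / ((j : ℝ) + 1)) ∧
    (∀ j, n - m < j → j < n →
      iprod (vpQ n m j) (vpQt n m j) =
        ((m : ℝ) + n - j) ^ 2 / (4 * (m : ℝ) ^ 2 * ((j : ℝ) + 1)) +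
        ((m : ℝ) - n + j) ^ 2 / (4 * (m : ℝ) ^ 2 * (2 * (n : ℝ) - j + 1))) :=
  vpQ_vpQt_biorthogonality_general n m
end

section
/- If f̃ = ∑_{j=0}^{n−1} f̃_j q̃_{n,j}^m, then V_n^m f̃ = ∑_{j=0}^{n−1} f̃_j w_j q_{n,j}^m, where w_j = 1/(j+1) for 0 ≤ j ≤ n−m and w_j = (1/(2m))·((m+n−j)/(j+1) + (j−n+m)/(2n−j+1)) for n−m < j < n. -/
/-- Chebyshev nodes of the second kind: zeros of `chebP n`. -/
noncomputable def chebNode (n k : ℕ) : ℝ := Real.cos (k * Real.pi / (n + 1))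

/-- Christoffel numbers for the weight √(1-x²). -/
noncomputable def chebWeight (n k : ℕ) : ℝ :=
  Real.pi / (n + 1) * Real.sin (k * Real.pi / (n + 1)) ^ 2

/-- The de la Vallée Poussin filter coefficients. -/
noncomputable def vpFilter (n m j : ℕ) : ℝ :=
  if j ≤ n - m then 1 else ((n : ℝ) + m - j) / (2 * m)

/-- The fundamental VP polynomials. -/
noncomputable def vpPhi (n m k : ℕ) (x : ℝ) : ℝ :=
  chebWeight n k *
    ∑ j ∈ Finset.range (n + m), vpFilter n m j * chebP j (chebNode n k) * chebP j x

/-- The VP interpolation operator `V_n^m f = ∑_{k=1}^n f(x_k) Φ_{n,k}^m`. -/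
noncomputable def vpV (n m : ℕ) (f : ℝ → ℝ) (x : ℝ) : ℝ :=
  ∑ k ∈ Finset.Icc 1 n, f (chebNode n k) * vpPhi n m k x

/-- The weights `w_j` of Lemma on `V_n^m` applied to the modified basis. -/
noncomputable def vpW (n m j : ℕ) : ℝ :=
  if j ≤ n - m then 1 / ((j : ℝ) + 1)
  else (1 / (2 * (m : ℝ))) *
    (((m : ℝ) + n - j) / ((j : ℝ) + 1) + ((j : ℝ) - n + m) / (2 * (n : ℝ) - j + 1))

/-!
With `θ_k = kπ/(n+1)` one has `λ_k p_j(x_k) p_r(x_k) = 2 sin((j+1)θ_k) sin((r+1)θ_k)/(n+1)`, and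
summing cosines over half a period gives the discrete orthogonality
`c_{n,r}(p_j) = δ_{r,j} - δ_{r+j,2n}` for `r, j ≤ 2n`. Hence `V_n^m p_j = μ_j p_j - μ_{2n-j} p_{2n-j}`
with `μ_j = vpFilter n m j`, which is `q_{n,j}^m` for `j < n`. Since `p_{2n-j}(x_k) = -p_j(x_k)`,
the modified basis polynomial `q̃_{n,j}^m` agrees with `w_j p_j` at the nodes, and `V_n^m` only
sees the nodes.
-/

open Real Finset

-- `sin (c * π / 2) ^ 2 = (1 - (-1) ^ c) / 2`: off the multiples of `2N` the half-period sum is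
-- `0` or `1` according to the parity of `c`.
theorem sum_range_cos_int_mul_pi_div (N : ℕ) (hN : N ≠ 0) (c : ℤ) :
    ∑ k ∈ range N, cos (c * π / N * k) =
      (if 2 * (N : ℤ) ∣ c then (N : ℝ) else 0) + sin (c * π / 2) ^ 2 := by
  split_ifs with hc
  · obtain ⟨t, rfl⟩ := hc
    have hterm (k : ℕ) : cos ((2 * N * t : ℤ) * π / N * k) = 1 := by
      rw [← cos_int_mul_two_pi (k * t)]
      congr 1
      push_cast
      field_simp
    simp only [hterm, sum_const, card_range, nsmul_eq_mul, mul_one]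
    rw [show ((2 * N * t : ℤ) : ℝ) * π / 2 = (N * t : ℤ) * π by push_cast; ring, sin_int_mul_pi]
    ring
  · have hhalf : sin (c * π / N / 2) ≠ 0 := by
      rw [Ne, sin_eq_zero_iff]
      rintro ⟨t, ht⟩
      refine hc ⟨t, ?_⟩
      have : (c : ℝ) = 2 * N * t := by
        field_simp at ht
        nlinarith [pi_pos]
      exact_mod_cast this
    have key := sin_mul_sum_cos N (c * π / N) 0
    simp only [add_zero] at key
    rw [show (N : ℝ) * (c * π / N) / 2 = c * π / 2 by field_simp,
      show ((N : ℝ) - 1) * (c * π / N) / 2 = c * π / 2 - c * π / N / 2 by field_simp,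
      cos_sub] at key
    have hsincos : sin (c * π / 2) * cos (c * π / 2) = 0 := by
      rw [← mul_right_inj' two_ne_zero, ← mul_assoc, ← sin_two_mul,
        show 2 * ((c : ℝ) * π / 2) = c * π by ring, sin_int_mul_pi, mul_zero]
    -- `sin u * cos (u - v) = sin u ^ 2 * sin v` because `sin u * cos u = sin (2 * u) / 2 = 0`
    apply mul_left_cancel₀ hhalf
    linear_combination key + cos (c * π / N / 2) * hsincos

theorem sum_range_two_mul_sin_mul_sin (N : ℕ) (hN : N ≠ 0) (a b : ℤ) :
    ∑ k ∈ range N, 2 * sin (a * π / N * k) * sin (b * π / N * k) =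
      N * ((if 2 * (N : ℤ) ∣ a - b then 1 else 0) - (if 2 * (N : ℤ) ∣ a + b then 1 else 0)) := by
  have hterm (k : ℕ) : 2 * sin (a * π / N * k) * sin (b * π / N * k) =
      cos ((a - b : ℤ) * π / N * k) - cos ((a + b : ℤ) * π / N * k) := by
    rw [two_mul_sin_mul_sin]
    push_cast
    ring_nf
  have hsq : sin ((a + b : ℤ) * π / 2) ^ 2 = sin ((a - b : ℤ) * π / 2) ^ 2 := by
    rw [show ((a + b : ℤ) : ℝ) * π / 2 = (a - b : ℤ) * π / 2 + b * π by push_cast; ring,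
      sin_add_int_mul_pi, mul_pow, ← sq_abs ((-1 : ℝ) ^ b), abs_neg_one_zpow, one_pow, one_mul]
  simp only [hterm, sum_sub_distrib, sum_range_cos_int_mul_pi_div N hN, hsq]
  split_ifs <;> ring

theorem chebP_cos (j : ℕ) {θ : ℝ} (h0 : 0 ≤ θ) (hπ : θ ≤ π) :
    chebP j (cos θ) = √(2 / π) * sin ((j + 1) * θ) / sin θ := by
  rw [chebP, arccos_cos h0 hπ]

theorem chebNode_angle_mem_Icc {n k : ℕ} (hk : k ≤ n + 1) :
    k * π / (n + 1) ∈ Set.Icc 0 π := by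
  have hk' : (k : ℝ) ≤ n + 1 := by exact_mod_cast hk
  constructor
  · positivity
  · rw [div_le_iff₀ (by positivity)]
    nlinarith [pi_pos]

theorem chebP_two_mul_sub_chebNode {n j k : ℕ} (hj : j ≤ 2 * n) (hk : k ≤ n + 1) :
    chebP (2 * n - j) (chebNode n k) = -chebP j (chebNode n k) := by
  obtain ⟨h0, hπ⟩ := chebNode_angle_mem_Icc hk
  rw [chebNode, chebP_cos _ h0 hπ, chebP_cos _ h0 hπ, Nat.cast_sub hj,
    show ((2 * n : ℕ) - j + 1 : ℝ) * (k * π / (n + 1)) = k * (2 * π) - (j + 1) * (k * π / (n + 1)) by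
      push_cast; field_simp; ring,
    sin_nat_mul_two_pi_sub]
  ring

theorem chebWeight_mul_chebP_mul_chebP {n k : ℕ} (j r : ℕ) (hk1 : 1 ≤ k) (hkn : k ≤ n) :
    chebWeight n k * chebP j (chebNode n k) * chebP r (chebNode n k) =
      2 * sin ((j + 1) * (k * π / (n + 1))) * sin ((r + 1) * (k * π / (n + 1))) / (n + 1) := by
  obtain ⟨h0, hπ⟩ := chebNode_angle_mem_Icc (n := n) (k := k) (by omega)
  have hsin : sin (k * π / (n + 1)) ≠ 0 := by
    refine (sin_pos_of_pos_of_lt_pi ?_ ?_).ne'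
    · have : (1 : ℝ) ≤ k := by exact_mod_cast hk1
      positivity
    · have : (k : ℝ) < n + 1 := by exact_mod_cast Nat.lt_succ_of_le hkn
      rw [div_lt_iff₀ (by positivity)]
      nlinarith [pi_pos]
  rw [chebWeight, chebNode, chebP_cos _ h0 hπ, chebP_cos _ h0 hπ]
  generalize k * π / (n + 1) = θ at hsin ⊢
  field_simp
  rw [sq_sqrt (by positivity)]
  field_simp

/-- The discrete coefficient `c_{n,r}(f)` of the paper. -/
noncomputable def chebCoeff (n r : ℕ) (f : ℝ → ℝ) : ℝ :=
  ∑ k ∈ Icc 1 n, chebWeight n k * chebP r (chebNode n k) * f (chebNode n k)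

theorem chebCoeff_chebP_eq_ite_dvd (n r j : ℕ) :
    chebCoeff n r (chebP j) =
      (if 2 * ((n + 1 : ℕ) : ℤ) ∣ (r : ℤ) - j then 1 else 0) -
        (if 2 * ((n + 1 : ℕ) : ℤ) ∣ (r : ℤ) + j + 2 then 1 else 0) := by
  have hterm : ∀ k ∈ Icc 1 n, chebWeight n k * chebP r (chebNode n k) * chebP j (chebNode n k) =
      (2 * sin (((r + 1 : ℕ) : ℤ) * π / (n + 1 : ℕ) * k) *
        sin (((j + 1 : ℕ) : ℤ) * π / (n + 1 : ℕ) * k)) / (n + 1 : ℕ) := by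
    intro k hk
    rw [chebWeight_mul_chebP_mul_chebP r j (mem_Icc.mp hk).1 (mem_Icc.mp hk).2]
    push_cast
    ring_nf
  have hzero : ∀ k ∈ range (n + 1), k ∉ Icc 1 n →
      2 * sin (((r + 1 : ℕ) : ℤ) * π / (n + 1 : ℕ) * k) *
        sin (((j + 1 : ℕ) : ℤ) * π / (n + 1 : ℕ) * k) = 0 := by
    intro k hk hk'
    obtain rfl : k = 0 := by simp only [mem_range, mem_Icc] at hk hk'; omega
    simp
  rw [chebCoeff, sum_congr rfl hterm, ← sum_div,
    sum_subset (fun k hk => by simp only [mem_Icc, mem_range] at hk ⊢; omega) hzero,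
    sum_range_two_mul_sin_mul_sin _ (Nat.succ_ne_zero n)]
  push_cast
  field_simp
  ring_nf

theorem chebCoeff_chebP {n r j : ℕ} (hr : r ≤ 2 * n) (hj : j ≤ 2 * n) :
    chebCoeff n r (chebP j) = (if r = j then 1 else 0) - (if r + j = 2 * n then 1 else 0) := by
  have hdiff : 2 * ((n + 1 : ℕ) : ℤ) ∣ (r : ℤ) - j ↔ r = j := by
    refine ⟨fun h => ?_, fun h => by simp [h]⟩
    have := Int.eq_zero_of_abs_lt_dvd h (abs_lt.mpr ⟨by omega, by omega⟩)
    omega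
  have hsum : 2 * ((n + 1 : ℕ) : ℤ) ∣ (r : ℤ) + j + 2 ↔ r + j = 2 * n := by
    refine ⟨fun h => ?_, fun h => ⟨1, by omega⟩⟩
    have := Int.eq_zero_of_abs_lt_dvd (dvd_sub h (dvd_refl _)) (abs_lt.mpr ⟨by omega, by omega⟩)
    omega
  rw [chebCoeff_chebP_eq_ite_dvd, if_congr hdiff rfl rfl, if_congr hsum rfl rfl]

theorem vpV_eq_sum_chebCoeff (n m : ℕ) (f : ℝ → ℝ) (x : ℝ) :
    vpV n m f x = ∑ r ∈ range (n + m), vpFilter n m r * chebCoeff n r f * chebP r x := by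
  simp only [vpV, vpPhi, chebCoeff, mul_sum, sum_mul]
  rw [sum_comm]
  exact sum_congr rfl fun r _ => sum_congr rfl fun k _ => by ring

theorem vpV_chebP {n m j : ℕ} (hmn : m ≤ n) (hj : j < n) : vpV n m (chebP j) = vpQ n m j := by
  funext x
  have hterm : ∀ r ∈ range (n + m), vpFilter n m r * chebCoeff n r (chebP j) * chebP r x =
      (if r = j then vpFilter n m r * chebP r x else 0) -
        (if r = 2 * n - j then vpFilter n m r * chebP r x else 0) := by
    intro r hr
    rw [chebCoeff_chebP (by simp only [mem_range] at hr; omega) (by omega),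
      if_congr (show r + j = 2 * n ↔ r = 2 * n - j by omega) rfl rfl]
    split_ifs <;> ring
  rw [vpV_eq_sum_chebCoeff, sum_congr rfl hterm, sum_sub_distrib, sum_ite_eq', sum_ite_eq',
    if_pos (mem_range.mpr (by omega))]
  unfold vpQ vpFilter
  by_cases h : j ≤ n - m
  · rw [if_pos h, if_pos h, if_neg (by simp only [mem_range]; omega)]
    ring
  · rw [if_neg h, if_neg h, if_pos (mem_range.mpr (by omega)), if_neg (by omega),
      Nat.cast_sub (by omega)]
    push_cast
    ring

theorem vpQt_chebNode {n m j k : ℕ} (hj : j < n) (hk : k ≤ n + 1) :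
    vpQt n m j (chebNode n k) = vpW n m j * chebP j (chebNode n k) := by
  unfold vpQt vpW
  split_ifs
  · ring
  · rw [chebP_two_mul_sub_chebNode (by omega) hk]
    ring

theorem vpV_congr_chebNode {n m : ℕ} {f g : ℝ → ℝ}
    (h : ∀ k ∈ Icc 1 n, f (chebNode n k) = g (chebNode n k)) : vpV n m f = vpV n m g :=
  funext fun _ => sum_congr rfl fun k hk => by rw [h k hk]

theorem vpV_const_mul (n m : ℕ) (c : ℝ) (f : ℝ → ℝ) (x : ℝ) :
    vpV n m (fun t => c * f t) x = c * vpV n m f x := by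
  simp only [vpV, mul_sum, mul_assoc]

theorem vpV_sum_mul {ι : Type*} (n m : ℕ) (s : Finset ι) (a : ι → ℝ) (g : ι → ℝ → ℝ) (x : ℝ) :
    vpV n m (fun t => ∑ j ∈ s, a j * g j t) x = ∑ j ∈ s, a j * vpV n m (g j) x := by
  simp only [vpV, sum_mul, mul_sum, mul_assoc]
  exact sum_comm

theorem vpV_vpQt {n m j : ℕ} (hmn : m ≤ n) (hj : j < n) (x : ℝ) :
    vpV n m (vpQt n m j) x = vpW n m j * vpQ n m j x := by
  rw [vpV_congr_chebNode (g := fun t => vpW n m j * chebP j t)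
      fun k hk => vpQt_chebNode hj (by simp only [mem_Icc] at hk; omega),
    vpV_const_mul, vpV_chebP hmn hj]

theorem vpV_on_modified_basis_general (n m : ℕ) (hmn : m < n) (a : ℕ → ℝ) :
    ∀ x : ℝ,
      vpV n m (fun t => ∑ j ∈ Finset.range n, a j * vpQt n m j t) x =
        ∑ j ∈ Finset.range n, a j * vpW n m j * vpQ n m j x := by
  intro x
  rw [vpV_sum_mul]
  exact sum_congr rfl fun j hj => by rw [vpV_vpQt hmn.le (mem_range.mp hj), mul_assoc]

theorem vpV_on_modified_basis (n m : ℕ) (hm : 0 < m) (hmn : m < n) (a : ℕ → ℝ) :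
    ∀ x : ℝ,
      vpV n m (fun t => ∑ j ∈ Finset.range n, a j * vpQt n m j t) x =
        ∑ j ∈ Finset.range n, a j * vpW n m j * vpQ n m j x :=
  vpV_on_modified_basis_general n m hmn a
end
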